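/- arXiv:1606.02750 — 5 statements merged into one kernel-verified Lean document; each statement's English description precedes it below -/
import Mathlib

section
/- Let λ, μ be real numbers with λ ≥ 1 and λ + μ > 1/2. Then for every z in the open unit disc 𝕌, the second normalized Wright function satisfies |𝕎_{λ,μ}(z)| ≤ 2(λ+μ)/(2(λ+μ)−1). -/
/-- The second normalized Wright function
`𝕎_{λ,μ}(z) = z + ∑_{m=1}^∞ (Γ(λ+μ)/((m+1)! Γ(λm+λ+μ))) z^{m+1}`
(the `m = 0` term is `z`). -/
noncomputable def normWright2 (lam mu : ℝ) (z : ℂ) : ℂ :=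
  ∑' m : ℕ,
    ((Real.Gamma (lam + mu) / (Nat.factorial (m + 1) * Real.Gamma (lam * m + lam + mu)) : ℝ) : ℂ)
      * z ^ (m + 1)

/-!
With `s = λ + μ`, the `m`-th coefficient of `𝕎_{λ,μ}` is at most `(2s)⁻ᵐ`: `(m+1)! ≥ 2ᵐ` and
`Γ(λm + s) ≥ Γ(m + s) ≥ sᵐ Γ(s)`. The middle inequality needs `Γ` to be increasing on `[3/2, ∞)`
(its minimum sits near `1.4616`), which holds because `Γ` is convex and
`Γ'(3/2) = √π (1 - γ/2 - log 2) > 0`. Summing the geometric series bounds `|𝕎_{λ,μ}(z)|` by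
`1 / (1 - (2s)⁻¹)`.
-/

open Real Set

theorem ConvexOn.monotoneOn_of_hasDerivAt_nonneg {S : Set ℝ} {f : ℝ → ℝ} {a f' : ℝ}
    (hf : ConvexOn ℝ S f) (ha : a ∈ S) (hderiv : HasDerivAt f f' a) (hf' : 0 ≤ f') :
    MonotoneOn f (S ∩ Ici a) := by
  rintro x ⟨hxS, hax⟩ y ⟨hyS, -⟩ hxy
  obtain rfl | hxy := hxy.eq_or_lt
  · rfl
  have hslope : 0 ≤ slope f x y := by
    obtain rfl | hax := (mem_Ici.mp hax).eq_or_lt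
    · exact hf'.trans (hf.le_slope_of_hasDerivAt ha hyS hxy hderiv)
    · calc 0 ≤ slope f a x := hf'.trans (hf.le_slope_of_hasDerivAt ha hxS hax hderiv)
        _ ≤ slope f x y := by
          simpa only [slope_def_field] using hf.slope_mono_adjacent ha hyS hax hxy
  rwa [slope_def_field, le_div_iff₀ (sub_pos.mpr hxy), zero_mul, sub_nonneg] at hslope

theorem eulerMascheroniConstant_add_two_mul_log_two_lt_two :
    eulerMascheroniConstant + 2 * log 2 < 2 := by
  have hγ := eulerMascheroniConstant_lt_eulerMascheroniSeq' 16
  have hlog : log (16 : ℕ) = 4 * log 2 := by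
    rw [show ((16 : ℕ) : ℝ) = 2 ^ 4 by norm_num, log_pow]; norm_num
  have hH : (harmonic 16 : ℝ) < 3.381 := by
    norm_num [harmonic, Finset.sum_range_succ]
  rw [eulerMascheroniSeq', if_neg (by norm_num), hlog] at hγ
  linarith [log_two_gt_d9]

theorem hasDerivAt_Gamma_three_halves :
    HasDerivAt Gamma (√π * (1 - (eulerMascheroniConstant + 2 * log 2) / 2)) (3 / 2) := by
  have hprod : HasDerivAt (fun s ↦ s * Gamma s)
      (1 * Gamma (1 / 2) + 1 / 2 * (-√π * (eulerMascheroniConstant + 2 * log 2))) (1 / 2) :=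
    (hasDerivAt_id _).mul hasDerivAt_Gamma_one_half
  have hshift := HasDerivAt.comp_sub_const (3 / 2 : ℝ) 1
    ((by norm_num : (1 / 2 : ℝ) = 3 / 2 - 1) ▸ hprod)
  refine (hshift.congr_of_eventuallyEq ?_).congr_deriv ?_
  · filter_upwards [eventually_ne_nhds (show (3 / 2 : ℝ) ≠ 1 by norm_num)] with s hs
    rw [← Gamma_add_one (sub_ne_zero.mpr hs), sub_add_cancel]
  · rw [show (3 / 2 : ℝ) - 1 = 1 / 2 by norm_num, Gamma_one_half_eq]; ring

theorem Gamma_monotoneOn_Ici_three_halves : MonotoneOn Gamma (Ici (3 / 2)) := by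
  have h := convexOn_Gamma.monotoneOn_of_hasDerivAt_nonneg (by norm_num : (3 / 2 : ℝ) ∈ Ioi 0)
    hasDerivAt_Gamma_three_halves
    (mul_nonneg (sqrt_nonneg π) (by linarith [eulerMascheroniConstant_add_two_mul_log_two_lt_two]))
  rwa [inter_eq_right.mpr (Ici_subset_Ioi.mpr (by norm_num))] at h

theorem pow_mul_Gamma_le_Gamma_nat_add {s : ℝ} (hs : 0 < s) (m : ℕ) :
    s ^ m * Gamma s ≤ Gamma (m + s) := by
  induction m with
  | zero => simp
  | succ m ih =>
    have hms : 0 < m + s := by positivity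
    calc s ^ (m + 1) * Gamma s = s * (s ^ m * Gamma s) := by ring
      _ ≤ (m + s) * Gamma (m + s) := by
        gcongr
        linarith
      _ = Gamma (↑(m + 1) + s) := by
        rw [← Gamma_add_one hms.ne']; push_cast; ring_nf

theorem pow_mul_Gamma_le_Gamma_mul_nat_add {lam s : ℝ} (hlam : 1 ≤ lam) (hs : 1 / 2 < s)
    (m : ℕ) : s ^ m * Gamma s ≤ Gamma (lam * m + s) := by
  refine (pow_mul_Gamma_le_Gamma_nat_add (by linarith) m).trans ?_
  rcases m.eq_zero_or_pos with rfl | hm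
  · simp
  have hm : (1 : ℝ) ≤ m := by exact_mod_cast hm
  exact Gamma_monotoneOn_Ici_three_halves (mem_Ici.mpr (by linarith))
    (mem_Ici.mpr (by nlinarith)) (by nlinarith)

theorem abs_normWright2_coeff_le (lam mu : ℝ) (hlam : 1 ≤ lam) (hmu : 1 / 2 < lam + mu)
    (m : ℕ) :
    |Gamma (lam + mu) / ((m + 1).factorial * Gamma (lam * m + lam + mu))|
      ≤ (2 * (lam + mu))⁻¹ ^ m := by
  have hGs : 0 < Gamma (lam + mu) := Gamma_pos_of_pos (by linarith)
  have hfact : (2 : ℝ) ^ m ≤ (m + 1).factorial := by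
    exact_mod_cast by
      simpa [add_comm] using Nat.factorial_mul_pow_le_factorial (m := 1) (n := m)
  have hGamma := pow_mul_Gamma_le_Gamma_mul_nat_add hlam hmu m
  rw [← add_assoc] at hGamma
  have hGpos : 0 < Gamma (lam * m + lam + mu) :=
    (mul_pos (pow_pos (by linarith) m) hGs).trans_le hGamma
  rw [abs_of_pos (div_pos hGs (by positivity))]
  calc Gamma (lam + mu) / ((m + 1).factorial * Gamma (lam * m + lam + mu))
      ≤ Gamma (lam + mu) / (2 ^ m * ((lam + mu) ^ m * Gamma (lam + mu))) := by
        gcongr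
    _ = (2 * (lam + mu))⁻¹ ^ m := by
        rw [inv_pow, mul_pow]
        field_simp

/-- If `λ ≥ 1` and `λ + μ > 1/2`, then `|𝕎_{λ,μ}(z)| ≤ 2(λ+μ)/(2(λ+μ)-1)` on the open
unit disc. -/
theorem abs_normWright2_le (lam mu : ℝ) (hlam : 1 ≤ lam) (hmu : 1 / 2 < lam + mu) :
    ∀ z : ℂ, ‖z‖ < 1 →
      ‖normWright2 lam mu z‖ ≤ 2 * (lam + mu) / (2 * (lam + mu) - 1) := by
  intro z hz
  set q := (2 * (lam + mu))⁻¹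
  have hq1 : q < 1 := inv_lt_one_of_one_lt₀ (by linarith)
  have hterm (m : ℕ) :
      ‖((Gamma (lam + mu) / ((m + 1).factorial * Gamma (lam * m + lam + mu)) : ℝ) : ℂ) *
        z ^ (m + 1)‖ ≤ q ^ m := by
    rw [norm_mul, Complex.norm_real, Real.norm_eq_abs, norm_pow]
    exact (mul_le_of_le_one_right (abs_nonneg _) (pow_le_one₀ (norm_nonneg z) hz.le)).trans
      (abs_normWright2_coeff_le lam mu hlam hmu m)
  calc ‖normWright2 lam mu z‖ ≤ (1 - q)⁻¹ :=
        tsum_of_norm_bounded (hasSum_geometric_of_lt_one (by positivity) hq1) hterm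
    _ = 2 * (lam + mu) / (2 * (lam + mu) - 1) := by
        have : 2 * (lam + mu) - 1 ≠ 0 := by linarith
        simp only [q]
        field_simp
end

section
/- Let λ, μ be real numbers with λ ≥ 1 and μ > 3/2, and let n be a natural number. Then for every z in the open unit disc 𝕌 the partial sum (𝒲_{λ,μ})_n(z) is nonzero for z ≠ 0 and Re(𝒲_{λ,μ}(z)/(𝒲_{λ,μ})_n(z)) ≥ (2μ−3)/(2μ−1), where at z = 0 the ratio is understood as its analytic extension with value 1. -/
/-! Write `𝒲 = z + P + T` and `(𝒲)ₙ = z + P`, where `P` collects the terms of degree `2, …, n + 1`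
and `T` is the tail. For `λ ≥ 1` the coefficient of `z^(m+2)` is at most `μ⁻¹ (2(μ+1))⁻ᵐ`
(from `(m+1)! ≥ 2ᵐ` and `Γ(λ(m+1)+μ) ≥ Γ(μ+m+1) ≥ μ(μ+1)ᵐ Γ(μ)`), so
`|P| + |T| ≤ |z|² · 2(μ+1)/(μ(2μ+1)) ≤ |z|²/c` with `c = (2μ-1)/2 ≥ 1`. Hence `c|T| + |P| < |z|`,
so `|T/(z+P)| ≤ 1/c` and `Re(𝒲/(𝒲)ₙ) = 1 + Re(T/(z+P)) ≥ 1 - 1/c = (2μ-3)/(2μ-1)`. -/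

/-- The normalized Wright function
`𝒲_{λ,μ}(z) = z + ∑_{m=1}^∞ (Γ(μ)/(m! Γ(λm+μ))) z^{m+1}`. -/
noncomputable def normWright (lam mu : ℝ) (z : ℂ) : ℂ :=
  ∑' m : ℕ, ((Real.Gamma mu / (Nat.factorial m * Real.Gamma (lam * m + mu)) : ℝ) : ℂ) * z ^ (m + 1)

/-- The `n`-th partial sum `(𝒲_{λ,μ})_n(z) = z + ∑_{m=1}^n (Γ(μ)/(m! Γ(λm+μ))) z^{m+1}`. -/
noncomputable def normWrightPartial (lam mu : ℝ) (n : ℕ) (z : ℂ) : ℂ :=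
  ∑ m ∈ Finset.range (n + 1),
    ((Real.Gamma mu / (Nat.factorial m * Real.Gamma (lam * m + mu)) : ℝ) : ℂ) * z ^ (m + 1)

open Finset

theorem norm_sum_range_add_norm_tsum_nat_add_le {E : Type*} [NormedAddCommGroup E] {b : ℕ → E}
    (hb : Summable (‖b ·‖)) (n : ℕ) :
    ‖∑ i ∈ range n, b i‖ + ‖∑' i, b (i + n)‖ ≤ ∑' i, ‖b i‖ :=
  calc _ ≤ ∑ i ∈ range n, ‖b i‖ + ∑' i, ‖b (i + n)‖ :=
        add_le_add (norm_sum_le _ _) (norm_tsum_le_tsum_norm ((summable_nat_add_iff n).2 hb))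
    _ = ∑' i, ‖b i‖ := hb.sum_add_tsum_nat_add n

theorem Complex.add_ne_zero_and_one_sub_inv_le_re_add_div {w P T : ℂ} {c : ℝ} (hc : 1 ≤ c)
    (h : c * (‖P‖ + ‖T‖) < ‖w‖) :
    w + P ≠ 0 ∧ 1 - c⁻¹ ≤ ((w + P + T) / (w + P)).re := by
  have hwP : c * ‖T‖ < ‖w + P‖ := by
    have := norm_sub_le (w + P) P
    rw [add_sub_cancel_right] at this
    nlinarith [norm_nonneg P]
  have hne : w + P ≠ 0 := norm_pos_iff.mp ((by positivity : 0 ≤ c * ‖T‖).trans_lt hwP)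
  refine ⟨hne, ?_⟩
  have hT : ‖T / (w + P)‖ ≤ c⁻¹ := by
    rw [norm_div, div_le_iff₀ (norm_pos_iff.mpr hne), ← div_eq_inv_mul,
      le_div_iff₀ (by linarith)]
    linarith
  rw [add_div, div_self hne, Complex.add_re, Complex.one_re]
  linarith [neg_abs_le (T / (w + P)).re, Complex.abs_re_le_norm (T / (w + P))]

theorem sum_range_ne_zero_and_one_sub_inv_le_re_tsum_div {a : ℕ → ℂ} (ha₀ : a 0 = 1)
    (ha : Summable fun m ↦ ‖a (m + 1)‖) {c : ℝ} (hc : 1 ≤ c)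
    (hac : c * ∑' m, ‖a (m + 1)‖ ≤ 1) (n : ℕ) {z : ℂ} (hz₀ : z ≠ 0) (hz : ‖z‖ < 1) :
    ∑ m ∈ range (n + 1), a m * z ^ (m + 1) ≠ 0 ∧
      1 - c⁻¹ ≤ ((∑' m, a m * z ^ (m + 1)) / ∑ m ∈ range (n + 1), a m * z ^ (m + 1)).re := by
  set b : ℕ → ℂ := fun m ↦ a (m + 1) * z ^ (m + 2)
  have hb_le (m : ℕ) : ‖b m‖ ≤ ‖z‖ ^ 2 * ‖a (m + 1)‖ :=
    calc ‖b m‖ = ‖z‖ ^ m * (‖z‖ ^ 2 * ‖a (m + 1)‖) := by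
          simp only [b, norm_mul, norm_pow, pow_add]; ring
      _ ≤ ‖z‖ ^ 2 * ‖a (m + 1)‖ :=
          mul_le_of_le_one_left (by positivity) (pow_le_one₀ (norm_nonneg z) hz.le)
  have hb : Summable (‖b ·‖) := .of_nonneg_of_le (fun _ ↦ norm_nonneg _) hb_le (ha.mul_left _)
  have hbound : c * (‖∑ i ∈ range n, b i‖ + ‖∑' i, b (i + n)‖) < ‖z‖ :=
    calc _ ≤ c * (‖z‖ ^ 2 * ∑' m, ‖a (m + 1)‖) := by
          gcongr
          refine (norm_sum_range_add_norm_tsum_nat_add_le hb n).trans ?_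
          rw [← tsum_mul_left]
          exact hb.tsum_le_tsum hb_le (ha.mul_left _)
      _ ≤ ‖z‖ ^ 2 := by nlinarith [sq_nonneg ‖z‖]
      _ < ‖z‖ := by nlinarith [norm_pos_iff.mpr hz₀]
  have hpartial : ∑ m ∈ range (n + 1), a m * z ^ (m + 1) = z + ∑ i ∈ range n, b i := by
    rw [sum_range_succ', ha₀]; simp only [b]; ring
  have hfull : ∑' m, a m * z ^ (m + 1) = z + ∑ i ∈ range n, b i + ∑' i, b (i + n) := by
    have hs : Summable fun m ↦ a m * z ^ (m + 1) := (summable_nat_add_iff 1).1 hb.of_norm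
    rw [hs.tsum_eq_zero_add, ha₀, one_mul, zero_add, pow_one, add_assoc,
      hb.of_norm.sum_add_tsum_nat_add]
  rw [hpartial, hfull]
  exact Complex.add_ne_zero_and_one_sub_inv_le_re_add_div hc hbound

theorem Real.mul_mul_pow_mul_Gamma_le_Gamma_add_nat_succ {x : ℝ} (hx : 0 < x) (m : ℕ) :
    x * (x + 1) ^ m * Gamma x ≤ Gamma (x + (m + 1)) := by
  induction m with
  | zero => simp [Gamma_add_one hx.ne']
  | succ k ih =>
    have hk : 0 < x + (k + 1) := by positivity
    calc x * (x + 1) ^ (k + 1) * Gamma x = (x + 1) * (x * (x + 1) ^ k * Gamma x) := by ring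
      _ ≤ (x + (k + 1)) * Gamma (x + (k + 1)) := by
          gcongr
          linarith [k.cast_nonneg (α := ℝ)]
      _ = Gamma (x + ((k + 1 : ℕ) + 1)) := by
          rw [← Gamma_add_one hk.ne']; push_cast; ring_nf

noncomputable def wrightCoeff (lam mu : ℝ) (m : ℕ) : ℝ :=
  Real.Gamma mu / (Nat.factorial m * Real.Gamma (lam * m + mu))

section wrightCoeff

variable {lam mu : ℝ}

theorem wrightCoeff_zero (hmu : 0 < mu) : wrightCoeff lam mu 0 = 1 := by
  simp [wrightCoeff, (Real.Gamma_pos_of_pos hmu).ne']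

theorem wrightCoeff_nonneg (hlam : 0 ≤ lam) (hmu : 0 < mu) (m : ℕ) : 0 ≤ wrightCoeff lam mu m := by
  have : 0 < Real.Gamma (lam * m + mu) := Real.Gamma_pos_of_pos (by positivity)
  have := Real.Gamma_pos_of_pos hmu
  unfold wrightCoeff; positivity

theorem wrightCoeff_succ_le (hlam : 1 ≤ lam) (hmu : 1 ≤ mu) (m : ℕ) :
    wrightCoeff lam mu (m + 1) ≤ mu⁻¹ * (2 * (mu + 1))⁻¹ ^ m := by
  have hmu₀ : 0 < mu := by linarith
  have hΓ := Real.Gamma_pos_of_pos hmu₀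
  have hfact : (2 : ℝ) ^ m ≤ (m + 1).factorial := by
    have := Nat.factorial_mul_pow_le_factorial (m := 1) (n := m)
    rw [Nat.factorial_one, one_mul, add_comm 1 m] at this
    exact_mod_cast this
  have hmono : Real.Gamma (mu + (m + 1)) ≤ Real.Gamma (lam * (m + 1 : ℕ) + mu) := by
    have : (m : ℝ) + 1 ≤ lam * (m + 1) := le_mul_of_one_le_left (by positivity) hlam
    have h2 : 2 ≤ mu + (m + 1) := by linarith [m.cast_nonneg (α := ℝ)]
    push_cast
    exact Real.Gamma_strictMonoOn_Ici.monotoneOn h2 (by simp only [Set.mem_Ici]; linarith)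
      (by linarith)
  have hden : 2 ^ m * (mu * (mu + 1) ^ m * Real.Gamma mu) ≤
      (m + 1).factorial * Real.Gamma (lam * (m + 1 : ℕ) + mu) :=
    mul_le_mul hfact ((Real.mul_mul_pow_mul_Gamma_le_Gamma_add_nat_succ hmu₀ m).trans hmono)
      (by positivity) (by positivity)
  calc wrightCoeff lam mu (m + 1) ≤ Real.Gamma mu / (2 ^ m * (mu * (mu + 1) ^ m * Real.Gamma mu)) :=
        div_le_div_of_nonneg_left hΓ.le (by positivity) hden
    _ = mu⁻¹ * (2 * (mu + 1))⁻¹ ^ m := by rw [inv_pow, mul_pow]; field_simp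

theorem hasSum_wrightCoeff_majorant (hmu : 0 < mu) :
    HasSum (fun m : ℕ ↦ mu⁻¹ * (2 * (mu + 1))⁻¹ ^ m) (2 * (mu + 1) / (mu * (2 * mu + 1))) := by
  have hq : (2 * (mu + 1))⁻¹ < 1 := inv_lt_one_of_one_lt₀ (by linarith)
  have hsum := (hasSum_geometric_of_lt_one (by positivity) hq).mul_left mu⁻¹
  rwa [show mu⁻¹ * (1 - (2 * (mu + 1))⁻¹)⁻¹ = 2 * (mu + 1) / (mu * (2 * mu + 1)) by
    rw [show 1 - (2 * (mu + 1))⁻¹ = (2 * mu + 1) / (2 * (mu + 1)) by field_simp; ring]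
    field_simp] at hsum

theorem summable_wrightCoeff_succ (hlam : 1 ≤ lam) (hmu : 1 ≤ mu) :
    Summable fun m ↦ wrightCoeff lam mu (m + 1) :=
  .of_nonneg_of_le (fun m ↦ wrightCoeff_nonneg (by linarith) (by linarith) (m + 1))
    (wrightCoeff_succ_le hlam hmu)
    (hasSum_wrightCoeff_majorant (by linarith)).summable

theorem tsum_wrightCoeff_succ_le (hlam : 1 ≤ lam) (hmu : 1 ≤ mu) :
    ∑' m, wrightCoeff lam mu (m + 1) ≤ 2 * (mu + 1) / (mu * (2 * mu + 1)) :=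
  hasSum_le (wrightCoeff_succ_le hlam hmu) (summable_wrightCoeff_succ hlam hmu).hasSum
    (hasSum_wrightCoeff_majorant (by linarith))

end wrightCoeff

/-- If `λ ≥ 1` and `μ > 3/2`, then on the open unit disc the partial sum `(𝒲_{λ,μ})_n`
is nonzero away from `0`, and `Re(𝒲_{λ,μ}(z)/(𝒲_{λ,μ})_n(z)) ≥ (2μ-3)/(2μ-1)`, the ratio
being understood as its analytic extension, with value `1`, at `z = 0`. -/
theorem re_normWright_div_partial (lam mu : ℝ) (hlam : 1 ≤ lam) (hmu : 3 / 2 < mu) (n : ℕ) :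
    ∀ z : ℂ, ‖z‖ < 1 →
      (z ≠ 0 → normWrightPartial lam mu n z ≠ 0) ∧
      (2 * mu - 3) / (2 * mu - 1) ≤
        (if z = 0 then (1 : ℂ) else normWright lam mu z / normWrightPartial lam mu n z).re := by
  intro z hz
  by_cases hz₀ : z = 0
  · subst hz₀
    refine ⟨fun h ↦ absurd rfl h, ?_⟩
    rw [if_pos rfl, Complex.one_re]
    exact div_le_one_of_le₀ (by linarith) (by linarith)
  have hmu₀ : 0 < mu := by linarith
  have hmu₁ : 1 ≤ mu := by linarith
  have hc : 1 ≤ (2 * mu - 1) / 2 := by rw [le_div_iff₀ two_pos]; linarith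
  have hnorm (m : ℕ) : ‖(wrightCoeff lam mu m : ℂ)‖ = wrightCoeff lam mu m :=
    Complex.norm_of_nonneg (wrightCoeff_nonneg (by linarith) hmu₀ m)
  have hcB : (2 * mu - 1) / 2 * ∑' m, wrightCoeff lam mu (m + 1) ≤ 1 :=
    calc _ ≤ (2 * mu - 1) / 2 * (2 * (mu + 1) / (mu * (2 * mu + 1))) := by
          gcongr
          exact tsum_wrightCoeff_succ_le hlam hmu₁
      _ ≤ 1 := by
          rw [div_mul_div_comm, div_le_one (by positivity)]; nlinarith
  obtain ⟨hne, hre⟩ := sum_range_ne_zero_and_one_sub_inv_le_re_tsum_div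
    (a := fun m ↦ (wrightCoeff lam mu m : ℂ)) (by simp [wrightCoeff_zero hmu₀])
    (by simpa only [hnorm] using summable_wrightCoeff_succ hlam hmu₁) hc (by simpa only [hnorm])
    n hz₀ hz
  refine ⟨fun _ ↦ hne, ?_⟩
  rw [if_neg hz₀]
  calc (2 * mu - 3) / (2 * mu - 1) = 1 - ((2 * mu - 1) / 2)⁻¹ := by
        field_simp [show 2 * mu - 1 ≠ 0 by linarith]; ring
    _ ≤ _ := hre
end

section
/- Let λ, μ be real numbers with λ ≥ 1 and μ > 3, and let n be a natural number. Then for every z in the open unit disc 𝕌 the derivative 𝒲'_{λ,μ}(z) is nonzero and Re((𝒲_{λ,μ})'_n(z)/𝒲'_{λ,μ}(z)) ≥ (μ−1)/(μ+1). -/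
/-- The derivative of the normalized Wright function:
`𝒲'_{λ,μ}(z) = 1 + ∑_{m=1}^∞ (Γ(μ)(m+1)/(m! Γ(λm+μ))) z^m`. -/
noncomputable def normWrightDeriv (lam mu : ℝ) (z : ℂ) : ℂ :=
  ∑' m : ℕ,
    ((Real.Gamma mu * (m + 1) / (Nat.factorial m * Real.Gamma (lam * m + mu)) : ℝ) : ℂ) * z ^ m

/-- The derivative of the `n`-th partial sum:
`(𝒲_{λ,μ})'_n(z) = 1 + ∑_{m=1}^n (Γ(μ)(m+1)/(m! Γ(λm+μ))) z^m`. -/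
noncomputable def normWrightPartialDeriv (lam mu : ℝ) (n : ℕ) (z : ℂ) : ℂ :=
  ∑ m ∈ Finset.range (n + 1),
    ((Real.Gamma mu * (m + 1) / (Nat.factorial m * Real.Gamma (lam * m + mu)) : ℝ) : ℂ) * z ^ m

/-!
Write `W = 𝒲'_{λ,μ}(z)`, `P = (𝒲_{λ,μ})'_n(z)` and `c_m` for the common Taylor coefficients.
Since `Γ(λm+μ) ≥ Γ(m+μ) ≥ μᵐ Γ(μ)` and `m + 1 ≤ 2 m!`, we have `c_m ≤ 2 μ⁻ᵐ`, so on the unit disc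
`‖W - P‖ + ‖P - 1‖ ≤ ∑_{m ≥ 1} 2 μ⁻ᵐ = 2/(μ-1) < 1`. This gives `W ≠ 0`, and with `ε = 2/(μ+1)`
it gives `(1-ε)‖W - P‖ + ε‖P - 1‖ ≤ ε`, which places `(W - P)/W` at least as close to `0` as
to `2ε`. Hence `Re((W - P)/W) ≤ ε`, that is `Re(P/W) ≥ 1 - ε = (μ-1)/(μ+1)`.
-/

open Finset

noncomputable def wrightDerivCoeff (lam mu : ℝ) (m : ℕ) : ℝ :=
  Real.Gamma mu * (m + 1) / (m.factorial * Real.Gamma (lam * m + mu))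

theorem wrightDerivCoeff_zero (lam : ℝ) {mu : ℝ} (hmu : 0 < mu) :
    wrightDerivCoeff lam mu 0 = 1 := by
  simp [wrightDerivCoeff, (Real.Gamma_pos_of_pos hmu).ne']

theorem wrightDerivCoeff_nonneg {lam mu : ℝ} (hlam : 0 ≤ lam) (hmu : 0 < mu) (m : ℕ) :
    0 ≤ wrightDerivCoeff lam mu m := by
  have := Real.Gamma_pos_of_pos hmu
  have := Real.Gamma_pos_of_pos (by positivity : 0 < lam * m + mu)
  unfold wrightDerivCoeff
  positivity

theorem pow_mul_Gamma_le_Gamma_nat_add_s8 {mu : ℝ} (hmu : 0 < mu) (m : ℕ) :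
    mu ^ m * Real.Gamma mu ≤ Real.Gamma (m + mu) := by
  induction m with
  | zero => simp
  | succ k ih =>
    have hk : (k : ℝ) + mu ≠ 0 := by positivity
    calc mu ^ (k + 1) * Real.Gamma mu = mu * (mu ^ k * Real.Gamma mu) := by ring
      _ ≤ (k + mu) * Real.Gamma (k + mu) := by
        have := Real.Gamma_pos_of_pos hmu
        gcongr
        linarith [(Nat.cast_nonneg k : (0 : ℝ) ≤ k)]
      _ = Real.Gamma ((k + 1 : ℕ) + mu) := by
        rw [← Real.Gamma_add_one hk]; push_cast; ring_nf

theorem wrightDerivCoeff_le {lam mu : ℝ} (hlam : 1 ≤ lam) (hmu : 2 ≤ mu) (m : ℕ) :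
    wrightDerivCoeff lam mu m ≤ 2 * mu⁻¹ ^ m := by
  have hmu0 : 0 < mu := by linarith
  have hm : (0 : ℝ) ≤ m := m.cast_nonneg
  have hGamma : mu ^ m * Real.Gamma mu ≤ Real.Gamma (lam * m + mu) :=
    (pow_mul_Gamma_le_Gamma_nat_add_s8 hmu0 m).trans <|
      Real.Gamma_strictMonoOn_Ici.monotoneOn (by simp; linarith) (by simp; nlinarith)
        (by nlinarith)
  have hfact : (m : ℝ) + 1 ≤ 2 * m.factorial := by
    exact_mod_cast (by linarith [m.self_le_factorial, m.factorial_pos] : m + 1 ≤ 2 * m.factorial)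
  have := Real.Gamma_pos_of_pos hmu0
  have := m.factorial_pos
  rw [wrightDerivCoeff, div_le_iff₀ (by positivity), inv_pow, ← div_eq_mul_inv,
    div_mul_eq_mul_div, le_div_iff₀ (by positivity)]
  calc Real.Gamma mu * (m + 1) * mu ^ m = (m + 1) * (mu ^ m * Real.Gamma mu) := by ring
    _ ≤ (2 * m.factorial) * Real.Gamma (lam * m + mu) := by gcongr
    _ = _ := by ring

theorem norm_wrightDerivCoeff_mul_pow_le {lam mu : ℝ} (hlam : 1 ≤ lam) (hmu : 2 ≤ mu) {z : ℂ}
    (hz : ‖z‖ ≤ 1) (m : ℕ) : ‖(wrightDerivCoeff lam mu m : ℂ) * z ^ m‖ ≤ 2 * mu⁻¹ ^ m := by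
  have hc := wrightDerivCoeff_nonneg (lam := lam) (by linarith) (by linarith : 0 < mu) m
  rw [norm_mul, norm_pow, Complex.norm_real, Real.norm_of_nonneg hc]
  calc wrightDerivCoeff lam mu m * ‖z‖ ^ m ≤ wrightDerivCoeff lam mu m * 1 := by
        gcongr
        exact pow_le_one₀ (norm_nonneg z) hz
    _ ≤ 2 * mu⁻¹ ^ m := by rw [mul_one]; exact wrightDerivCoeff_le hlam hmu m

theorem hasSum_inv_pow_succ {r : ℝ} (hr : 1 < r) :
    HasSum (fun m : ℕ => r⁻¹ ^ (m + 1)) (r - 1)⁻¹ := by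
  have h := (hasSum_geometric_of_lt_one (by positivity) (inv_lt_one_of_one_lt₀ hr)).mul_left r⁻¹
  have hr' : r - 1 ≠ 0 := by linarith
  rw [show (r - 1)⁻¹ = r⁻¹ * (1 - r⁻¹)⁻¹ by field_simp]
  simpa only [pow_succ, mul_comm] using h

theorem norm_tsum_sub_sum_add_norm_sum_sub_le {E : Type*} [NormedAddCommGroup E]
    [CompleteSpace E] {f : ℕ → E} (hf : Summable fun m => ‖f m‖) (n : ℕ) :
    ‖∑' m, f m - ∑ m ∈ range (n + 1), f m‖ + ‖∑ m ∈ range (n + 1), f m - f 0‖ ≤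
      ∑' m, ‖f (m + 1)‖ := by
  have hf1 : Summable fun m => ‖f (m + 1)‖ := (summable_nat_add_iff 1).mpr hf
  have hfn : Summable fun m => ‖f (m + (n + 1))‖ := (summable_nat_add_iff (n + 1)).mpr hf
  have htail : ∑' m, f m - ∑ m ∈ range (n + 1), f m = ∑' m, f (m + (n + 1)) := by
    rw [← hf.of_norm.sum_add_tsum_nat_add (n + 1), add_sub_cancel_left]
  have hhead : ∑ m ∈ range (n + 1), f m - f 0 = ∑ m ∈ range n, f (m + 1) := by
    rw [sum_range_succ', add_sub_cancel_right]
  rw [htail, hhead, ← hf1.sum_add_tsum_nat_add n, add_comm]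
  exact add_le_add (norm_sum_le _ _) (norm_tsum_le_tsum_norm hfn)

theorem Complex.re_le_half_of_norm_le_norm_sub {u : ℂ} {r : ℝ} (hr : 0 < r)
    (h : ‖u‖ ≤ ‖u - r‖) : u.re ≤ r / 2 := by
  have h2 := pow_le_pow_left₀ (norm_nonneg u) h 2
  simp only [Complex.sq_norm, Complex.normSq_apply, Complex.sub_re, Complex.sub_im,
    Complex.ofReal_re, Complex.ofReal_im, sub_zero] at h2
  nlinarith

theorem Complex.one_sub_le_re_div {P W : ℂ} {ε : ℝ} (hε : 0 < ε) (hε1 : 2 * ε ≤ 1)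
    (hW : W ≠ 0) (h : (1 - ε) * ‖W - P‖ + ε * ‖P - 1‖ ≤ ε) : 1 - ε ≤ (P / W).re := by
  have hnorm : ‖W - P‖ ≤ ‖W - P - (2 * ε : ℝ) * W‖ := by
    have htri : 2 * ε ≤
        (1 - 2 * ε) * ‖W - P‖ + 2 * ε * ‖P - 1‖ + ‖W - P - (2 * ε : ℝ) * W‖ := by
      calc 2 * ε = ‖((2 * ε : ℝ) : ℂ)‖ := by
            rw [Complex.norm_real, Real.norm_of_nonneg (by positivity)]
        _ = ‖((1 - 2 * ε : ℝ) : ℂ) * (W - P) - ((2 * ε : ℝ) : ℂ) * (P - 1)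
              - (W - P - (2 * ε : ℝ) * W)‖ := by
            congr 1; push_cast; ring
        _ ≤ ‖((1 - 2 * ε : ℝ) : ℂ) * (W - P)‖ + ‖((2 * ε : ℝ) : ℂ) * (P - 1)‖
              + ‖W - P - (2 * ε : ℝ) * W‖ :=
            (norm_sub_le _ _).trans (add_le_add_left (norm_sub_le _ _) _)
        _ = _ := by
            rw [norm_mul, norm_mul, Complex.norm_real, Complex.norm_real,
              Real.norm_of_nonneg (by linarith), Real.norm_of_nonneg (by positivity)]
    nlinarith
  have hu : ‖(W - P) / W‖ ≤ ‖(W - P) / W - (2 * ε : ℝ)‖ := by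
    rwa [← mul_div_cancel_right₀ ((2 * ε : ℝ) : ℂ) hW, ← sub_div, norm_div, norm_div,
      div_le_div_iff_of_pos_right (norm_pos_iff.mpr hW)]
  have hre := re_le_half_of_norm_le_norm_sub (by positivity : 0 < 2 * ε) hu
  rw [sub_div, div_self hW, Complex.sub_re, Complex.one_re] at hre
  linarith

/-- If `λ ≥ 1` and `μ > 3`, then on the open unit disc `𝒲'_{λ,μ}` is nonzero and
`Re((𝒲_{λ,μ})'_n(z)/𝒲'_{λ,μ}(z)) ≥ (μ-1)/(μ+1)`. -/
theorem re_partialDeriv_div_normWrightDeriv (lam mu : ℝ) (hlam : 1 ≤ lam) (hmu : 3 < mu)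
    (n : ℕ) :
    ∀ z : ℂ, ‖z‖ < 1 →
      normWrightDeriv lam mu z ≠ 0 ∧
      (mu - 1) / (mu + 1) ≤
        (normWrightPartialDeriv lam mu n z / normWrightDeriv lam mu z).re := by
  intro z hz
  set f : ℕ → ℂ := fun m => (wrightDerivCoeff lam mu m : ℂ) * z ^ m
  have hf_le (m : ℕ) : ‖f m‖ ≤ 2 * mu⁻¹ ^ m :=
    norm_wrightDerivCoeff_mul_pow_le hlam (by linarith) hz.le m
  have hf : Summable fun m => ‖f m‖ :=
    .of_nonneg_of_le (fun _ => norm_nonneg _) hf_le <| .mul_left 2 <|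
      summable_geometric_of_lt_one (by positivity) (inv_lt_one_of_one_lt₀ (by linarith))
  have hf0 : f 0 = 1 := by simp [f, wrightDerivCoeff_zero lam (by linarith : 0 < mu)]
  set W := normWrightDeriv lam mu z
  set P := normWrightPartialDeriv lam mu n z
  have hbound : ‖W - P‖ + ‖P - 1‖ ≤ 2 / (mu - 1) := by
    have h := norm_tsum_sub_sum_add_norm_sum_sub_le hf n
    rw [hf0] at h
    exact h.trans <| hasSum_le (fun m => hf_le (m + 1)) ((summable_nat_add_iff 1).mpr hf).hasSum
      ((hasSum_inv_pow_succ (by linarith)).mul_left 2)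
  have hW : W ≠ 0 := by
    intro hW0
    have := norm_sub_le P (P - 1)
    rw [hW0, zero_sub, norm_neg] at hbound
    rw [sub_sub_cancel, norm_one] at this
    linarith [(div_lt_one (by linarith : 0 < mu - 1)).mpr (by linarith : (2 : ℝ) < mu - 1)]
  refine ⟨hW, ?_⟩
  have hε : (mu - 1) / (mu + 1) = 1 - 2 / (mu + 1) := by field_simp; ring
  rw [hε]
  refine Complex.one_sub_le_re_div (by positivity)
    (by rw [← mul_div_assoc, div_le_one (by linarith)]; linarith) hW ?_
  rw [← hε, div_mul_eq_mul_div, div_mul_eq_mul_div, ← add_div,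
    div_le_div_iff_of_pos_right (by linarith)]
  rw [le_div_iff₀ (by linarith)] at hbound
  nlinarith [norm_nonneg (P - 1)]
end

section
/- Let λ, μ be real numbers with λ ≥ 1 and μ > 1, and let n be a natural number. Then for every z in the open unit disc 𝕌 the partial sum (𝔸[𝒲_{λ,μ}])_n(z) is nonzero for z ≠ 0 and Re(𝔸[𝒲_{λ,μ}](z)/(𝔸[𝒲_{λ,μ}])_n(z)) ≥ (2μ−2)/(2μ−1), where at z = 0 the ratio is understood as its analytic extension with value 1. -/
/-!
Factor out `z`: `𝔸[𝒲_{λ,μ}](z) = z g(z)` with `g(w) = ∑ aₘ wᵐ`, `a₀ = 1`, and the bounds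
`(m+1)! ≥ 2ᵐ`, `Γ(λm+μ) ≥ Γ(μ+m) ≥ μᵐ Γ(μ)` give `0 ≤ aₘ ≤ (2μ)⁻ᵐ`, so
`σ = ∑_{m≥1} aₘ ≤ 1/(2μ-1) < 1`. On the closed unit disc the `n`-th partial sum `gₙ` of `g`
satisfies `‖gₙ - 1‖ ≤ S` and `‖g - gₙ‖ ≤ T`, where `S + T = σ` splits `σ` at `n`. Hence
`Re (g / gₙ) ≥ 1 - T / (1 - S) ≥ 1 - σ ≥ (2μ-2)/(2μ-1)`.
-/

/-- The Alexander transform of the normalized Wright function: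
`𝔸[𝒲_{λ,μ}](z) = z + ∑_{m=1}^∞ (Γ(μ)/((m+1)! Γ(λm+μ))) z^{m+1}`. -/
noncomputable def alexNormWright (lam mu : ℝ) (z : ℂ) : ℂ :=
  ∑' m : ℕ,
    ((Real.Gamma mu / (Nat.factorial (m + 1) * Real.Gamma (lam * m + mu)) : ℝ) : ℂ) * z ^ (m + 1)

/-- The `n`-th partial sum
`(𝔸[𝒲_{λ,μ}])_n(z) = z + ∑_{m=1}^n (Γ(μ)/((m+1)! Γ(λm+μ))) z^{m+1}`. -/
noncomputable def alexNormWrightPartial (lam mu : ℝ) (n : ℕ) (z : ℂ) : ℂ :=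
  ∑ m ∈ Finset.range (n + 1),
    ((Real.Gamma mu / (Nat.factorial (m + 1) * Real.Gamma (lam * m + mu)) : ℝ) : ℂ) * z ^ (m + 1)

open Finset

section PowerSeriesOnClosedDisc

variable {c : ℕ → ℂ} {w : ℂ}

lemma norm_mul_pow_le_norm (hw : ‖w‖ ≤ 1) (a : ℂ) (m : ℕ) : ‖a * w ^ m‖ ≤ ‖a‖ := by
  rw [norm_mul, norm_pow]
  exact mul_le_of_le_one_right (norm_nonneg a) (pow_le_one₀ (norm_nonneg w) hw)

lemma norm_sum_range_mul_pow_sub_le (hc0 : c 0 = 1) (hw : ‖w‖ ≤ 1) (n : ℕ) :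
    ‖∑ m ∈ range (n + 1), c m * w ^ m - 1‖ ≤ ∑ m ∈ range n, ‖c (m + 1)‖ := by
  rw [sum_range_succ', hc0, pow_zero, mul_one, add_sub_cancel_right]
  exact norm_sum_le_of_le _ fun m _ => norm_mul_pow_le_norm hw _ _

lemma norm_tsum_mul_pow_sub_sum_le (hc : Summable (‖c ·‖)) (hw : ‖w‖ ≤ 1) (N : ℕ) :
    ‖∑' m, c m * w ^ m - ∑ m ∈ range N, c m * w ^ m‖ ≤ ∑' m, ‖c (m + N)‖ := by
  have hsum : Summable fun m => c m * w ^ m :=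
    hc.of_norm_bounded fun m => norm_mul_pow_le_norm hw _ _
  rw [← hsum.sum_add_tsum_nat_add N, add_sub_cancel_left]
  exact tsum_of_norm_bounded ((summable_nat_add_iff N).2 hc).hasSum
    fun m => norm_mul_pow_le_norm hw _ _

lemma div_one_sub_le_add {S T : ℝ} (hS : 0 ≤ S) (hT : 0 ≤ T) (hST : S + T < 1) :
    T / (1 - S) ≤ S + T := by
  rw [div_le_iff₀ (by linarith)]
  nlinarith

theorem sum_range_ne_zero_and_re_tsum_div_ge (hc0 : c 0 = 1) (hc : Summable (‖c ·‖))
    (hσ : ∑' m, ‖c (m + 1)‖ < 1) (hw : ‖w‖ ≤ 1) (n : ℕ) :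
    ∑ m ∈ range (n + 1), c m * w ^ m ≠ 0 ∧
      1 - ∑' m, ‖c (m + 1)‖ ≤ ((∑' m, c m * w ^ m) / ∑ m ∈ range (n + 1), c m * w ^ m).re := by
  set f := ∑' m, c m * w ^ m
  set p := ∑ m ∈ range (n + 1), c m * w ^ m
  set S := ∑ m ∈ range n, ‖c (m + 1)‖
  set T := ∑' m, ‖c (m + (n + 1))‖
  have hsplit : S + T = ∑' m, ‖c (m + 1)‖ := by
    simpa [S, T, add_assoc, add_comm 1 n] using
      ((summable_nat_add_iff 1).2 hc).sum_add_tsum_nat_add n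
  have hS : 0 ≤ S := sum_nonneg fun _ _ => norm_nonneg _
  have hT : 0 ≤ T := tsum_nonneg fun _ => norm_nonneg _
  have hp : 1 - S ≤ ‖p‖ := by
    have := norm_sub_norm_le (1 : ℂ) (1 - p)
    rw [norm_one, sub_sub_cancel, norm_sub_rev] at this
    linarith [norm_sum_range_mul_pow_sub_le hc0 hw n]
  have hp0 : p ≠ 0 := norm_pos_iff.1 (by linarith)
  refine ⟨hp0, ?_⟩
  have htail : ‖f - p‖ / ‖p‖ ≤ T / (1 - S) :=
    div_le_div₀ hT (norm_tsum_mul_pow_sub_sum_le hc hw (n + 1)) (by linarith) hp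
  have hre : -(‖f - p‖ / ‖p‖) ≤ (f / p).re - 1 := by
    have := neg_le_of_abs_le (Complex.abs_re_le_norm ((f - p) / p))
    rwa [norm_div, sub_div, div_self hp0, Complex.sub_re, Complex.one_re] at this
  linarith [div_one_sub_le_add hS hT (hsplit ▸ hσ)]

end PowerSeriesOnClosedDisc

namespace Real

lemma pow_mul_Gamma_le_Gamma_add_nat {s : ℝ} (hs : 0 < s) (m : ℕ) :
    s ^ m * Gamma s ≤ Gamma (s + m) := by
  induction m with
  | zero => simp
  | succ k ih =>
    have hsk : 0 < s + k := by positivity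
    rw [Nat.cast_succ, ← add_assoc, Gamma_add_one hsk.ne', pow_succ, mul_right_comm,
      mul_comm (s + k)]
    exact mul_le_mul ih (by linarith [k.cast_nonneg (α := ℝ)]) hs.le (Gamma_pos_of_pos hsk).le

lemma Gamma_add_nat_le_Gamma_mul_add {lam s : ℝ} (hlam : 1 ≤ lam) (hs : 1 ≤ s) (m : ℕ) :
    Gamma (s + m) ≤ Gamma (lam * m + s) := by
  rcases Nat.eq_zero_or_pos m with rfl | hm
  · simp
  have hm1 : (1 : ℝ) ≤ m := Nat.one_le_cast.2 hm
  exact Gamma_strictMonoOn_Ici.monotoneOn (show 2 ≤ s + m by linarith)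
    (show 2 ≤ lam * m + s by nlinarith) (by nlinarith)

end Real

noncomputable def alexWrightCoeff (lam mu : ℝ) (m : ℕ) : ℝ :=
  Real.Gamma mu / (Nat.factorial (m + 1) * Real.Gamma (lam * m + mu))

section AlexWrightCoeff

variable {lam mu : ℝ}

lemma alexWrightCoeff_zero (hmu : 0 < mu) : alexWrightCoeff lam mu 0 = 1 := by
  simp [alexWrightCoeff, (Real.Gamma_pos_of_pos hmu).ne']

lemma alexWrightCoeff_nonneg (hlam : 0 ≤ lam) (hmu : 0 < mu) (m : ℕ) :
    0 ≤ alexWrightCoeff lam mu m :=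
  div_nonneg (Real.Gamma_pos_of_pos hmu).le
    (mul_nonneg (Nat.cast_nonneg _) (Real.Gamma_pos_of_pos (by positivity)).le)

lemma alexWrightCoeff_le (hlam : 1 ≤ lam) (hmu : 1 ≤ mu) (m : ℕ) :
    alexWrightCoeff lam mu m ≤ (2 * mu)⁻¹ ^ m := by
  have hmu0 : 0 < mu := by linarith
  have hfac : (2 : ℝ) ^ m ≤ (m + 1).factorial := by
    have h : 2 ^ m ≤ (m + 1).factorial := by
      simpa [add_comm 1 m] using Nat.factorial_mul_pow_le_factorial (m := 1) (n := m)
    exact_mod_cast h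
  have hGamma : mu ^ m * Real.Gamma mu ≤ Real.Gamma (lam * m + mu) :=
    (Real.pow_mul_Gamma_le_Gamma_add_nat hmu0 m).trans
      (Real.Gamma_add_nat_le_Gamma_mul_add hlam hmu m)
  have hΓ := Real.Gamma_pos_of_pos hmu0
  rw [alexWrightCoeff, div_le_iff₀ (by positivity), inv_pow, inv_mul_eq_div,
    le_div_iff₀ (by positivity), mul_pow]
  calc Real.Gamma mu * (2 ^ m * mu ^ m) = 2 ^ m * (mu ^ m * Real.Gamma mu) := by ring
    _ ≤ _ := mul_le_mul hfac hGamma (by positivity) (by positivity)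

lemma summable_alexWrightCoeff (hlam : 1 ≤ lam) (hmu : 1 ≤ mu) :
    Summable (alexWrightCoeff lam mu) :=
  .of_nonneg_of_le (alexWrightCoeff_nonneg (by linarith) (by linarith))
    (alexWrightCoeff_le hlam hmu)
    (summable_geometric_of_lt_one (by positivity) (inv_lt_one_of_one_lt₀ (by linarith)))

lemma tsum_alexWrightCoeff_succ_le (hlam : 1 ≤ lam) (hmu : 1 < mu) :
    ∑' m, alexWrightCoeff lam mu (m + 1) ≤ (2 * mu - 1)⁻¹ := by
  have hq : (2 * mu)⁻¹ < 1 := inv_lt_one_of_one_lt₀ (by linarith)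
  have hgeom := summable_geometric_of_lt_one (by positivity) hq
  calc ∑' m, alexWrightCoeff lam mu (m + 1)
      ≤ ∑' m, (2 * mu)⁻¹ ^ (m + 1) :=
        ((summable_nat_add_iff 1).2 (summable_alexWrightCoeff hlam hmu.le)).tsum_le_tsum
          (fun m => alexWrightCoeff_le hlam hmu.le _) ((summable_nat_add_iff 1).2 hgeom)
    _ = (2 * mu - 1)⁻¹ := by
        simp_rw [pow_succ]
        rw [tsum_mul_right, tsum_geometric_of_lt_one (by positivity) hq]
        field_simp

end AlexWrightCoeff

lemma alexNormWright_eq (lam mu : ℝ) (z : ℂ) :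
    alexNormWright lam mu z = z * ∑' m, (alexWrightCoeff lam mu m : ℂ) * z ^ m := by
  rw [← tsum_mul_left]
  exact tsum_congr fun m => by rw [alexWrightCoeff, pow_succ]; ring

lemma alexNormWrightPartial_eq (lam mu : ℝ) (n : ℕ) (z : ℂ) :
    alexNormWrightPartial lam mu n z =
      z * ∑ m ∈ range (n + 1), (alexWrightCoeff lam mu m : ℂ) * z ^ m := by
  rw [mul_sum]
  exact sum_congr rfl fun m _ => by rw [alexWrightCoeff, pow_succ]; ring

/-- If `λ ≥ 1` and `μ > 1`, then on the open unit disc `(𝔸[𝒲_{λ,μ}])_n` is nonzero away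
from `0`, and `Re(𝔸[𝒲_{λ,μ}](z)/(𝔸[𝒲_{λ,μ}])_n(z)) ≥ (2μ-2)/(2μ-1)`, the ratio being
understood as its analytic extension, with value `1`, at `z = 0`. -/
theorem re_alexNormWright_div_partial (lam mu : ℝ) (hlam : 1 ≤ lam) (hmu : 1 < mu) (n : ℕ) :
    ∀ z : ℂ, ‖z‖ < 1 →
      (z ≠ 0 → alexNormWrightPartial lam mu n z ≠ 0) ∧
      (2 * mu - 2) / (2 * mu - 1) ≤
        (if z = 0 then (1 : ℂ)
          else alexNormWright lam mu z / alexNormWrightPartial lam mu n z).re := by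
  intro z hz
  have hnorm (m : ℕ) : ‖(alexWrightCoeff lam mu m : ℂ)‖ = alexWrightCoeff lam mu m :=
    Complex.norm_of_nonneg (alexWrightCoeff_nonneg (by linarith) (by linarith) m)
  have hσ : ∑' m, ‖(alexWrightCoeff lam mu (m + 1) : ℂ)‖ ≤ (2 * mu - 1)⁻¹ := by
    simpa only [hnorm] using tsum_alexWrightCoeff_succ_le hlam hmu
  have hbound : (2 * mu - 2) / (2 * mu - 1) = 1 - (2 * mu - 1)⁻¹ := by
    have : 2 * mu - 1 ≠ 0 := by linarith
    field_simp
    ring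
  obtain ⟨hne, hre⟩ := sum_range_ne_zero_and_re_tsum_div_ge
    (c := fun m => (alexWrightCoeff lam mu m : ℂ))
    (by simp [alexWrightCoeff_zero (by linarith : 0 < mu)])
    (by simpa only [hnorm] using summable_alexWrightCoeff hlam hmu.le)
    (hσ.trans_lt (inv_lt_one_of_one_lt₀ (by linarith))) hz.le n
  refine ⟨fun hz0 => by rw [alexNormWrightPartial_eq]; exact mul_ne_zero hz0 hne, ?_⟩
  rw [hbound]
  split_ifs with hz0
  · rw [Complex.one_re]
    linarith [inv_pos.2 (by linarith : (0 : ℝ) < 2 * mu - 1)]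
  · rw [alexNormWright_eq, alexNormWrightPartial_eq, mul_div_mul_left _ _ hz0]
    linarith
end

section
/- Let λ, μ be real numbers with λ ≥ 1 and μ > 3. Then the normalized Wright function 𝒲_{λ,μ} satisfies Re(𝒲'_{λ,μ}(z)) ≥ (μ−3)/(μ−1) > 0 for all z in the open unit disc 𝕌, and consequently 𝒲_{λ,μ} is univalent (injective) on 𝕌. -/
open Set
open scoped Nat

open Complex ComplexConjugate in
theorem Convex.injOn_of_hasDerivAt_of_re_pos {f f' : ℂ → ℂ} {s : Set ℂ} (hs : Convex ℝ s)
    (hf : ∀ z ∈ s, HasDerivAt f (f' z) z) (hf' : ∀ z ∈ s, 0 < (f' z).re) : InjOn f s := by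
  intro z₁ h₁ z₂ h₂ hfz
  by_contra hne
  set w := z₂ - z₁
  have hw : w ≠ 0 := sub_ne_zero.2 (Ne.symm hne)
  have hseg : ∀ t ∈ Icc (0 : ℝ) 1, z₁ + t * w ∈ s := fun t ht => by
    simpa only [real_smul] using hs.add_smul_sub_mem h₁ h₂ ht
  have hderiv : ∀ t ∈ Icc (0 : ℝ) 1, HasDerivAt (fun t : ℝ => (conj w * f (z₁ + t * w)).re)
      (normSq w * (f' (z₁ + t * w)).re) t := by
    intro t ht
    have hline : HasDerivAt (fun ζ : ℂ => z₁ + ζ * w) w t := by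
      simpa using ((hasDerivAt_id (t : ℂ)).mul_const w).const_add z₁
    refine (((hf _ (hseg t ht)).comp (t : ℂ) hline).const_mul (conj w)).real_of_complex
      |>.congr_deriv ?_
    rw [mul_comm (f' _), ← mul_assoc, ← normSq_eq_conj_mul_self, re_ofReal_mul]
  obtain ⟨c, hc, hslope⟩ := exists_hasDerivAt_eq_slope _ _ zero_lt_one
    (fun t ht => (hderiv t ht).continuousAt.continuousWithinAt)
    (fun t ht => hderiv t (Ioo_subset_Icc_self ht))
  have hc' := Ioo_subset_Icc_self hc
  have hz₂ : z₁ + ((1 : ℝ) : ℂ) * w = z₂ := by simp [w]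
  simp only [ofReal_zero, zero_mul, add_zero, hz₂, hfz, sub_self, zero_div] at hslope
  exact (mul_pos (normSq_pos.2 hw) (hf' _ (hseg c hc'))).ne' hslope

theorem Nat.succ_le_two_mul_factorial (n : ℕ) : n + 1 ≤ 2 * n ! := by
  have := n.self_le_factorial
  have := n.factorial_pos
  omega

namespace Real

theorem Gamma_mul_pow_le_Gamma_add_nat {x : ℝ} (hx : 0 < x) (n : ℕ) :
    Gamma x * x ^ n ≤ Gamma (x + n) := by
  induction n with
  | zero => simp
  | succ n ih =>
    have hxn : 0 < x + n := by positivity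
    calc Gamma x * x ^ (n + 1) = Gamma x * x ^ n * x := by rw [pow_succ, mul_assoc]
      _ ≤ Gamma (x + n) * (x + n) := mul_le_mul ih (by linarith) hx.le (Gamma_pos_of_pos hxn).le
      _ = Gamma (x + (n + 1 : ℕ)) := by
        rw [Nat.cast_succ, ← add_assoc, Gamma_add_one hxn.ne', mul_comm]

end Real

open Real

theorem summable_two_mul_inv_pow {mu : ℝ} (hmu : 1 < mu) :
    Summable fun m : ℕ => 2 * mu⁻¹ ^ m :=
  (summable_geometric_of_lt_one (by positivity) (inv_lt_one_of_one_lt₀ hmu)).mul_left 2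

theorem hasSum_two_mul_inv_pow_succ {mu : ℝ} (hmu : 1 < mu) :
    HasSum (fun m : ℕ => 2 * mu⁻¹ ^ (m + 1)) (2 / (mu - 1)) := by
  have hsum := (hasSum_geometric_of_lt_one (by positivity) (inv_lt_one_of_one_lt₀ hmu)).mul_left
    (2 * mu⁻¹)
  rw [show 2 * mu⁻¹ * (1 - mu⁻¹)⁻¹ = 2 / (mu - 1) by field_simp [(by linarith : mu - 1 ≠ 0)]]
    at hsum
  simpa only [pow_succ', mul_assoc] using hsum

noncomputable def normWrightDerivCoeff (lam mu : ℝ) (m : ℕ) : ℝ :=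
  Gamma mu * (m + 1) / (m ! * Gamma (lam * m + mu))

theorem normWrightDeriv_eq_tsum (lam mu : ℝ) (z : ℂ) :
    normWrightDeriv lam mu z = ∑' m : ℕ, (normWrightDerivCoeff lam mu m : ℂ) * z ^ m :=
  rfl

section NormWright

variable {lam mu : ℝ}

theorem normWrightDerivCoeff_zero (hmu : 0 < mu) : normWrightDerivCoeff lam mu 0 = 1 := by
  simp [normWrightDerivCoeff, (Gamma_pos_of_pos hmu).ne']

theorem normWrightDerivCoeff_nonneg (hlam : 0 ≤ lam) (hmu : 0 < mu) (m : ℕ) :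
    0 ≤ normWrightDerivCoeff lam mu m := by
  have := Gamma_pos_of_pos hmu
  have := Gamma_pos_of_pos (by positivity : 0 < lam * m + mu)
  unfold normWrightDerivCoeff
  positivity

theorem normWrightDerivCoeff_le (hlam : 1 ≤ lam) (hmu : 2 ≤ mu) (m : ℕ) :
    normWrightDerivCoeff lam mu m ≤ 2 * mu⁻¹ ^ m := by
  have hmu0 : 0 < mu := by linarith
  have hm : (0 : ℝ) ≤ m := m.cast_nonneg
  have hΓ : Gamma mu * mu ^ m ≤ Gamma (lam * m + mu) :=
    (Gamma_mul_pow_le_Gamma_add_nat hmu0 m).trans <|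
      Gamma_strictMonoOn_Ici.monotoneOn (mem_Ici.2 (by linarith)) (mem_Ici.2 (by nlinarith))
        (by nlinarith)
  have hfact : (m + 1 : ℝ) ≤ 2 * m ! := by exact_mod_cast Nat.succ_le_two_mul_factorial m
  have := Gamma_pos_of_pos hmu0
  have := m.factorial_pos
  calc normWrightDerivCoeff lam mu m ≤ Gamma mu * (m + 1) / (m ! * (Gamma mu * mu ^ m)) := by
        unfold normWrightDerivCoeff; gcongr
    _ = (m + 1) / m ! * mu⁻¹ ^ m := by rw [inv_pow]; field_simp
    _ ≤ 2 * mu⁻¹ ^ m := by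
        gcongr
        rwa [div_le_iff₀ (by positivity)]

theorem norm_normWrightDerivCoeff_mul_pow_le (hlam : 1 ≤ lam) (hmu : 2 ≤ mu) {z : ℂ}
    (hz : ‖z‖ ≤ 1) (m : ℕ) : ‖(normWrightDerivCoeff lam mu m : ℂ) * z ^ m‖ ≤ 2 * mu⁻¹ ^ m := by
  have hc : 0 ≤ normWrightDerivCoeff lam mu m :=
    normWrightDerivCoeff_nonneg (by linarith) (by linarith) m
  rw [norm_mul, norm_pow, Complex.norm_real, Real.norm_of_nonneg hc]
  exact (mul_le_of_le_one_right hc (pow_le_one₀ (norm_nonneg z) hz)).trans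
    (normWrightDerivCoeff_le hlam hmu m)

theorem normWrightDeriv_re_ge (hlam : 1 ≤ lam) (hmu : 2 ≤ mu) {z : ℂ} (hz : ‖z‖ ≤ 1) :
    (mu - 3) / (mu - 1) ≤ (normWrightDeriv lam mu z).re := by
  have hsum : Summable fun m : ℕ => (normWrightDerivCoeff lam mu m : ℂ) * z ^ m :=
    .of_norm_bounded (summable_two_mul_inv_pow (by linarith))
      (norm_normWrightDerivCoeff_mul_pow_le hlam hmu hz)
  have htail : ‖∑' m : ℕ, (normWrightDerivCoeff lam mu (m + 1) : ℂ) * z ^ (m + 1)‖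
      ≤ 2 / (mu - 1) :=
    tsum_of_norm_bounded (hasSum_two_mul_inv_pow_succ (by linarith))
      fun m => norm_normWrightDerivCoeff_mul_pow_le hlam hmu hz (m + 1)
  have hre_tail := neg_le_of_abs_le ((Complex.abs_re_le_norm _).trans htail)
  have hbound : (mu - 3) / (mu - 1) = 1 - 2 / (mu - 1) := by
    field_simp [(by linarith : mu - 1 ≠ 0)]
    ring
  rw [normWrightDeriv_eq_tsum, hsum.tsum_eq_zero_add, normWrightDerivCoeff_zero (by linarith)]
  simp only [Complex.ofReal_one, pow_zero, mul_one, Complex.add_re, Complex.one_re]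
  linarith

theorem hasDerivAt_normWright (hlam : 1 ≤ lam) (hmu : 2 ≤ mu) {z : ℂ} (hz : ‖z‖ < 1) :
    HasDerivAt (normWright lam mu) (normWrightDeriv lam mu z) z := by
  refine hasDerivAt_tsum_of_isPreconnected (summable_two_mul_inv_pow (by linarith))
    Metric.isOpen_ball (convex_ball (0 : ℂ) 1).isPreconnected (fun m w _ => ?_)
    (fun m w hw => norm_normWrightDerivCoeff_mul_pow_le hlam hmu (mem_ball_zero_iff.1 hw).le m)
    (Metric.mem_ball_self one_pos) ?_ (mem_ball_zero_iff.2 hz)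
  · refine ((hasDerivAt_pow (m + 1) w).const_mul _).congr_deriv ?_
    simp only [normWrightDerivCoeff, Nat.add_sub_cancel]
    push_cast
    ring
  · simp

end NormWright

/-- If `λ ≥ 1` and `μ > 3`, then `Re 𝒲'_{λ,μ}(z) ≥ (μ−3)/(μ−1) > 0` on the open unit
disc, and consequently `𝒲_{λ,μ}` is univalent (injective) on the open unit disc. -/
theorem normWright_injOn (lam mu : ℝ) (hlam : 1 ≤ lam) (hmu : 3 < mu) :
    (∀ z : ℂ, ‖z‖ < 1 → (mu - 3) / (mu - 1) ≤ (normWrightDeriv lam mu z).re) ∧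
    (0 : ℝ) < (mu - 3) / (mu - 1) ∧
    Set.InjOn (normWright lam mu) {z : ℂ | ‖z‖ < 1} := by
  have hmu2 : 2 ≤ mu := by linarith
  have hpos : (0 : ℝ) < (mu - 3) / (mu - 1) := div_pos (by linarith) (by linarith)
  have hre (z : ℂ) (hz : ‖z‖ < 1) : (mu - 3) / (mu - 1) ≤ (normWrightDeriv lam mu z).re :=
    normWrightDeriv_re_ge hlam hmu2 hz.le
  refine ⟨hre, hpos, ?_⟩
  have hdisc : Convex ℝ {z : ℂ | ‖z‖ < 1} := by
    simpa only [Metric.ball, dist_zero_right] using convex_ball (0 : ℂ) 1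
  exact hdisc.injOn_of_hasDerivAt_of_re_pos (fun z hz => hasDerivAt_normWright hlam hmu2 hz)
    fun z hz => hpos.trans_le (hre z hz)
end
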